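/- Let s be a positive integer. The alternating word (+-)^s (of length 2s) satisfies (+-)^s ≥ W for every word W over {+,-,*} of length at most s, and for every word W of length s+1 that contains at least one * except those of the form W = (-)^r * (+)^l with r + l = s. -/

import Mathlib

inductive Symb : Type
  | plus | minus | star
deriving DecidableEq


/-- the dual of a symbol: `+` ↦ `-`, `-` ↦ `+`, `*` ↦ `*` -/
def dualSym : Symb → Symb
  | Symb.plus => Symb.minus
  | Symb.minus => Symb.plus
  | Symb.star => Symb.star

/-- the dual (involution) of a word: reverse and dualize each symbol -/
def dualWord (W : List Symb) : List Symb := (W.map dualSym).reverse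

/-- the arc relation of the reflexive path `P(W)` on vertices `{0,…,|W|}` -/
def pathArc (W : List Symb) (i j : ℕ) : Prop :=
  i ≤ W.length ∧ j ≤ W.length ∧
    (i = j ∨ (j = i + 1 ∧ (W[i]? = some Symb.plus ∨ W[i]? = some Symb.star))
           ∨ (i = j + 1 ∧ (W[j]? = some Symb.minus ∨ W[j]? = some Symb.star)))

/-- `f` is an end-point preserving homomorphism from the path `P(V)` onto the path `P(U)` -/
def EPHom (V U : List Symb) (f : ℕ → ℕ) : Prop :=
  f 0 = 0 ∧ f V.length = U.length ∧
  (∀ i j, pathArc V i j → pathArc U (f i) (f j)) ∧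
  (∀ m, m ≤ U.length → ∃ i, i ≤ V.length ∧ f i = m)

/-- the order on words: `U ≤ V` iff there is an end-point preserving
homomorphism from `P(V)` onto `P(U)` -/
def wle (U V : List Symb) : Prop := ∃ f, EPHom V U f

/-!
A homomorphism from `P((+-)^s)` onto `P(W)` is a walk on `P(W)` from `0` at time `0` to the
end at time `2s` that, at time `t`, may advance over a symbol `c` only if `c = *` or `c` is the
`t`-th symbol of `(+-)^s` (`Crossable`). The greedy walk, which advances whenever allowed, spends
`cost c t ∈ {1, 2}` steps on each symbol, so it arrives after `finish W 0 ≤ 2|W|` steps and is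
a homomorphism onto as soon as this is at most `2s`. For `|W| = s + 1` we need two symbols
of cost `1`: one is the `*`, and a second one exists unless the walk spends two steps on every
`-` before the first `*` and on every `+` after it, i.e. unless `W = (-)^r * (+)^l`.
-/

/-- The symbol on the arc between `t` and `t + 1` in `P((+-)^s)`. -/
def altSym (t : ℕ) : Symb := if Even t then .plus else .minus

lemma altSym_ne_star (t : ℕ) : altSym t ≠ .star := by
  unfold altSym; split <;> simp

def Crossable (c : Symb) (t : ℕ) : Prop := c = .star ∨ c = altSym t

instance (c : Symb) (t : ℕ) : Decidable (Crossable c t) :=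
  inferInstanceAs (Decidable (_ ∨ _))

lemma crossable_succ_of_not_crossable {c : Symb} {t : ℕ} (h : ¬ Crossable c t) :
    Crossable c (t + 1) := by
  unfold Crossable altSym at *
  cases c <;> by_cases ht : Even t <;> simp_all [Nat.even_add_one]

def cost (c : Symb) (t : ℕ) : ℕ := if Crossable c t then 1 else 2

lemma cost_le_two (c : Symb) (t : ℕ) : cost c t ≤ 2 := by
  unfold cost; split <;> omega

lemma cost_star (t : ℕ) : cost .star t = 1 := by
  simp [cost, Crossable]

lemma cost_plus (t : ℕ) : cost .plus t = if Even t then 1 else 2 := by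
  by_cases ht : Even t <;> simp [cost, Crossable, altSym, ht]

lemma cost_minus (t : ℕ) : cost .minus t = if Even t then 2 else 1 := by
  by_cases ht : Even t <;> simp [cost, Crossable, altSym, ht]

def finish : List Symb → ℕ → ℕ
  | [], t => t
  | c :: W, t => finish W (t + cost c t)

lemma finish_append (U V : List Symb) (t : ℕ) : finish (U ++ V) t = finish V (finish U t) := by
  induction U generalizing t with
  | nil => rfl
  | cons c U ih => exact ih _

lemma le_finish (W : List Symb) (t : ℕ) : t ≤ finish W t := by
  induction W generalizing t with
  | nil => exact le_rfl
  | cons c W ih => exact (Nat.le_add_right t _).trans (ih _)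

lemma finish_le (W : List Symb) (t : ℕ) : finish W t ≤ t + 2 * W.length := by
  induction W generalizing t with
  | nil => simp [finish]
  | cons c W ih =>
    have := ih (t + cost c t)
    have := cost_le_two c t
    simp only [finish, List.length_cons]
    omega

lemma finish_add_one_le_of_odd {W : List Symb} {t : ℕ} (ht : Odd t)
    (hW : ∃ c ∈ W, c ≠ .plus) : finish W t + 1 ≤ t + 2 * W.length := by
  induction W generalizing t with
  | nil => simp at hW
  | cons c W ih =>
    simp only [finish, List.length_cons]
    by_cases hc : c = .plus
    · subst hc
      have hrest : ∃ c ∈ W, c ≠ .plus := by simpa using hW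
      have := ih (ht.add_even even_two) hrest
      rw [cost_plus, if_neg (Nat.not_even_iff_odd.mpr ht)]
      omega
    · have hcost : cost c t = 1 := by
        cases c
        · exact absurd rfl hc
        · rw [cost_minus, if_neg (Nat.not_even_iff_odd.mpr ht)]
        · exact cost_star t
      have := finish_le W (t + cost c t)
      omega

lemma finish_add_two_le_of_even {W : List Symb} {t : ℕ} (ht : Even t) (hstar : .star ∈ W)
    (hW : ∀ r l, W ≠ List.replicate r .minus ++ .star :: List.replicate l .plus) :
    finish W t + 2 ≤ t + 2 * W.length := by
  induction W generalizing t with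
  | nil => simp at hstar
  | cons c W ih =>
    simp only [finish, List.length_cons]
    cases c with
    | minus =>
      have := ih (ht.add even_two) (by simpa using hstar) fun r l h =>
        hW (r + 1) l (by simp [h, List.replicate_succ])
      rw [cost_minus, if_pos ht]
      omega
    | plus =>
      have := finish_add_one_le_of_odd (ht.add_one) ⟨.star, by simpa using hstar, by simp⟩
      rw [cost_plus, if_pos ht]
      omega
    | star =>
      have hrest : ∃ c ∈ W, c ≠ .plus := by
        by_contra! h
        exact hW 0 W.length (by simp [← List.eq_replicate_iff.mpr ⟨rfl, h⟩])
      have := finish_add_one_le_of_odd (ht.add_one) hrest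
      rw [cost_star]
      omega

def walk (W : List Symb) : ℕ → ℕ
  | 0 => 0
  | t + 1 =>
    match W[walk W t]? with
    | some c => if Crossable c t then walk W t + 1 else walk W t
    | none => walk W t

section Walk

variable {W : List Symb} {t : ℕ}

lemma walk_succ_of_getElem? {c : Symb} (h : W[walk W t]? = some c) :
    walk W (t + 1) = if Crossable c t then walk W t + 1 else walk W t := by
  simp [walk, h]

lemma walk_succ_cases :
    walk W (t + 1) = walk W t ∨
      (walk W (t + 1) = walk W t + 1 ∧ ∃ c, W[walk W t]? = some c ∧ Crossable c t) := by
  rcases h : W[walk W t]? with _ | c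
  · simp [walk, h]
  · rw [walk_succ_of_getElem? h]
    split_ifs with hc
    · exact .inr ⟨rfl, c, rfl, hc⟩
    · exact .inl rfl

lemma walk_le_length (W : List Symb) (t : ℕ) : walk W t ≤ W.length := by
  induction t with
  | zero => simp [walk]
  | succ t ih =>
    rcases walk_succ_cases (W := W) (t := t) with h | ⟨h, c, hc, -⟩
    · omega
    · have := (List.getElem?_eq_some_iff.mp hc).1
      omega

lemma walk_monotone (W : List Symb) : Monotone (walk W) :=
  monotone_nat_of_le_succ fun t => by
    rcases walk_succ_cases (W := W) (t := t) with h | ⟨h, -⟩ <;> omega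

/-- `finish (W.take a) 0` is the time at which the greedy walk reaches vertex `a`. -/
lemma walk_finish_take {a : ℕ} (ha : a ≤ W.length) : walk W (finish (W.take a) 0) = a := by
  induction a with
  | zero => rfl
  | succ a ih =>
    have hlt : a < W.length := ha
    have hget : W[walk W (finish (W.take a) 0)]? = some W[a] := by
      rw [ih hlt.le, List.getElem?_eq_getElem hlt]
    rw [List.take_add_one, List.getElem?_eq_getElem hlt, Option.toList_some, finish_append]
    simp only [finish, cost]
    split_ifs with hc
    · rw [walk_succ_of_getElem? hget, if_pos hc, ih hlt.le]
    · have hstay : walk W (finish (W.take a) 0 + 1) = a := by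
        rw [walk_succ_of_getElem? hget, if_neg hc, ih hlt.le]
      have hget' : W[walk W (finish (W.take a) 0 + 1)]? = some W[a] := by
        rw [hstay, List.getElem?_eq_getElem hlt]
      rw [walk_succ_of_getElem? hget', if_pos (crossable_succ_of_not_crossable hc), hstay]

end Walk

def alt (s : ℕ) : List Symb := (List.replicate s [Symb.plus, Symb.minus]).flatten

lemma alt_succ (s : ℕ) : alt (s + 1) = .plus :: .minus :: alt s := by
  simp [alt, List.replicate_succ]

lemma length_alt (s : ℕ) : (alt s).length = 2 * s := by
  induction s with
  | zero => rfl
  | succ s ih => simp [alt_succ, ih]; omega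

lemma getElem?_alt {s i : ℕ} (hi : i < 2 * s) : (alt s)[i]? = some (altSym i) := by
  induction s generalizing i with
  | zero => omega
  | succ s ih =>
    rw [alt_succ]
    match i with
    | 0 => simp [altSym]
    | 1 => simp [altSym]
    | i + 2 => simpa [altSym, Nat.even_add] using ih (i := i) (by omega)

lemma pathArc_walk_of_pathArc_alt {W : List Symb} {s i j : ℕ} (h : pathArc (alt s) i j) :
    pathArc W (walk W i) (walk W j) := by
  obtain ⟨hi, hj, rfl | ⟨rfl, hsym⟩ | ⟨rfl, hsym⟩⟩ := h
  · exact ⟨walk_le_length W i, walk_le_length W i, .inl rfl⟩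
  · rw [length_alt] at hj
    have hplus : altSym i = .plus := by
      rw [getElem?_alt (by omega)] at hsym
      simpa [altSym_ne_star] using hsym
    refine ⟨walk_le_length W i, walk_le_length W _, ?_⟩
    rcases walk_succ_cases (W := W) (t := i) with h | ⟨h, c, hc, hcross⟩
    · exact .inl h.symm
    · rcases hcross with rfl | rfl
      · exact .inr (.inl ⟨h, .inr hc⟩)
      · exact .inr (.inl ⟨h, .inl (hplus ▸ hc)⟩)
  · rw [length_alt] at hi
    have hminus : altSym j = .minus := by
      rw [getElem?_alt (by omega)] at hsym
      simpa [altSym_ne_star] using hsym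
    refine ⟨walk_le_length W _, walk_le_length W j, ?_⟩
    rcases walk_succ_cases (W := W) (t := j) with h | ⟨h, c, hc, hcross⟩
    · exact .inl h
    · rcases hcross with rfl | rfl
      · exact .inr (.inr ⟨h, .inr hc⟩)
      · exact .inr (.inr ⟨h, .inl (hminus ▸ hc)⟩)

lemma wle_alt_of_finish_le {W : List Symb} {s : ℕ} (h : finish W 0 ≤ 2 * s) :
    wle W (alt s) := by
  have hend : walk W (2 * s) = W.length := by
    have hreach := walk_finish_take (le_refl W.length)
    rw [List.take_length] at hreach
    exact le_antisymm (walk_le_length W _) (hreach ▸ walk_monotone W h)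
  refine ⟨walk W, rfl, by rw [length_alt, hend], fun i j => pathArc_walk_of_pathArc_alt, ?_⟩
  intro m hm
  refine ⟨finish (W.take m) 0, ?_, walk_finish_take hm⟩
  calc finish (W.take m) 0 ≤ finish (W.drop m) (finish (W.take m) 0) := le_finish _ _
    _ = finish W 0 := by rw [← finish_append, List.take_append_drop]
    _ ≤ (alt s).length := by rw [length_alt]; exact h

theorem stmt_14_general (s : ℕ) :
    (∀ W : List Symb, W.length ≤ s →
      wle W ((List.replicate s [Symb.plus, Symb.minus]).flatten)) ∧
    (∀ W : List Symb, W.length = s + 1 → Symb.star ∈ W →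
      (∀ r l : ℕ, r + l = s →
        W ≠ List.replicate r Symb.minus ++ Symb.star :: List.replicate l Symb.plus) →
      wle W ((List.replicate s [Symb.plus, Symb.minus]).flatten)) := by
  refine ⟨fun W hlen => wle_alt_of_finish_le ?_, fun W hlen hstar hexc => wle_alt_of_finish_le ?_⟩
  · have := finish_le W 0
    omega
  · have hW : ∀ r l, W ≠ List.replicate r .minus ++ .star :: List.replicate l .plus := by
      rintro r l rfl
      exact hexc r l (by simp only [List.length_append, List.length_replicate, List.length_cons] at hlen; omega) rfl
    have := finish_add_two_le_of_even Even.zero hstar hW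
    omega

/-- `(+-)^s ≥ W` for every word `W` of length at most `s`, and for every `W` of
length `s+1` containing at least one `*` except those of the form `(-)^r * (+)^l`. -/
theorem stmt_14 (s : ℕ) (hs : 1 ≤ s) :
    (∀ W : List Symb, W.length ≤ s →
      wle W ((List.replicate s [Symb.plus, Symb.minus]).flatten)) ∧
    (∀ W : List Symb, W.length = s + 1 → Symb.star ∈ W →
      (∀ r l : ℕ, r + l = s →
        W ≠ List.replicate r Symb.minus ++ Symb.star :: List.replicate l Symb.plus) →
      wle W ((List.replicate s [Symb.plus, Symb.minus]).flatten)) :=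
  stmt_14_general s
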